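/- The polynomial x⁶ − z⁶ − y²z⁴ is irreducible in ℚ[x,y,z], hence A = ℚ[x,y,z]/(x⁶ − z⁶ − y²z⁴) is an integral domain. -/
import Mathlib

namespace Stmt7Aux

open Polynomial

noncomputable def piA : Polynomial (Polynomial ℚ) := X ^ 2 + C (X ^ 2)

lemma no_sqrt (b : FractionRing (Polynomial ℚ)) :
    b ^ 2 ≠ -(algebraMap (Polynomial ℚ) (FractionRing (Polynomial ℚ)) (X ^ 2)) := by
  intro hb
  obtain ⟨⟨p, q⟩, hq⟩ := IsLocalization.surj (nonZeroDivisors (Polynomial ℚ)) b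
  have hq0 : (q : Polynomial ℚ) ≠ 0 := nonZeroDivisors.ne_zero q.2
  have hinj := IsFractionRing.injective (Polynomial ℚ) (FractionRing (Polynomial ℚ))
  have key : p ^ 2 = -((X * (q : Polynomial ℚ)) ^ 2) := by
    apply hinj
    simp only [map_pow, map_neg, map_mul, ← hq]
    rw [mul_pow, hb, map_pow]; ring
  have hr : (X * (q : Polynomial ℚ)) ≠ 0 := mul_ne_zero X_ne_zero hq0
  have h1 : p.leadingCoeff ^ 2 = -((X * (q : Polynomial ℚ)).leadingCoeff ^ 2) := by
    rw [← leadingCoeff_pow, ← leadingCoeff_pow, key, leadingCoeff_neg]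
  have h2 : (X * (q : Polynomial ℚ)).leadingCoeff ≠ 0 := leadingCoeff_ne_zero.mpr hr
  have h3 : 0 < (X * (q : Polynomial ℚ)).leadingCoeff ^ 2 :=
    lt_of_le_of_ne (sq_nonneg _) (Ne.symm (pow_ne_zero 2 h2))
  nlinarith [sq_nonneg p.leadingCoeff]

lemma irr_pi : Irreducible piA := by
  have hm : piA.Monic := by
    unfold piA; monicity!
  rw [hm.irreducible_iff_irreducible_map_fraction_map (K := FractionRing (Polynomial ℚ))]
  have : (piA.map (algebraMap (Polynomial ℚ) (FractionRing (Polynomial ℚ)))) =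
      X ^ 2 - C (-(algebraMap (Polynomial ℚ) (FractionRing (Polynomial ℚ)) (X ^ 2))) := by
    simp [piA, Polynomial.map_add, Polynomial.map_pow, sub_neg_eq_add]
  rw [this]
  exact X_pow_sub_C_irreducible_of_prime Nat.prime_two no_sqrt

lemma prime_pi : Prime piA := UniqueFactorizationMonoid.irreducible_iff_prime.mp irr_pi

noncomputable def aA : Polynomial (Polynomial ℚ) := C (X ^ 4) * piA

lemma natDegree_pi : piA.natDegree = 2 := by
  unfold piA
  compute_degree!

lemma irr_f : Irreducible ((X : Polynomial (Polynomial (Polynomial ℚ))) ^ 6 - C aA) := by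
  set f : Polynomial (Polynomial (Polynomial ℚ)) := X ^ 6 - C aA with hf
  have hpi0 : piA ≠ 0 := prime_pi.ne_zero
  have hP : (Ideal.span {piA}).IsPrime := (Ideal.span_singleton_prime hpi0).mpr prime_pi
  have hmonic : f.Monic := monic_X_pow_sub_C aA (by norm_num)
  have hdeg : f.natDegree = 6 := by rw [hf]; exact natDegree_X_pow_sub_C
  have hEis : f.IsEisensteinAt (Ideal.span {piA}) := by
    constructor
    · rw [hmonic.leadingCoeff]
      exact fun h => hP.ne_top (Ideal.eq_top_of_isUnit_mem _ h isUnit_one)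
    · intro n hn
      rw [hdeg] at hn
      rw [hf, coeff_sub, coeff_X_pow, coeff_C]
      interval_cases n <;> simp [aA, Ideal.mem_span_singleton, dvd_neg]
    · have hc : f.coeff 0 = -aA := by simp [hf, coeff_X_pow]
      rw [hc, Ideal.span_singleton_pow, Ideal.mem_span_singleton]
      intro hmem
      obtain ⟨c, hcc⟩ := hmem
      have key : aA = piA * piA * (-c) := by
        have h0 : aA = -(piA ^ 2 * c) := by rw [← hcc, neg_neg]
        rw [h0]; ring
      have h2 : piA ∣ C ((X : Polynomial ℚ) ^ 4) := by
        apply (mul_dvd_mul_iff_right hpi0).mp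
        exact ⟨-c, by rw [show C ((X : Polynomial ℚ) ^ 4) * piA = aA from rfl, key]⟩
      have hC0 : (C ((X : Polynomial ℚ) ^ 4) : Polynomial (Polynomial ℚ)) ≠ 0 := by
        simp [X_ne_zero, pow_ne_zero]
      have := natDegree_le_of_dvd h2 hC0
      rw [natDegree_pi, natDegree_C] at this
      omega
  exact hEis.irreducible hP hmonic.isPrimitive (by rw [hdeg]; norm_num)

end Stmt7Aux

namespace Stmt7Aux
open Polynomial

noncomputable def E : MvPolynomial (Fin 3) ℚ ≃ₐ[ℚ] Polynomial (Polynomial (Polynomial ℚ)) :=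
  (MvPolynomial.finSuccEquiv ℚ 2).trans <| Polynomial.mapAlgEquiv <|
    (MvPolynomial.finSuccEquiv ℚ 1).trans <| Polynomial.mapAlgEquiv <|
      (MvPolynomial.finSuccEquiv ℚ 0).trans <| Polynomial.mapAlgEquiv
        (MvPolynomial.isEmptyAlgEquiv ℚ (Fin 0))

lemma E_X0 : E (MvPolynomial.X 0) = X := by
  rw [E, AlgEquiv.trans_apply, MvPolynomial.finSuccEquiv_X_zero, Polynomial.coe_mapAlgEquiv,
    Polynomial.map_X]

lemma E_X1 : E (MvPolynomial.X 1) = C X := by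
  have h : (MvPolynomial.X 1 : MvPolynomial (Fin 3) ℚ) = MvPolynomial.X (Fin.succ 0) := rfl
  rw [h, E]
  simp only [AlgEquiv.trans_apply, MvPolynomial.finSuccEquiv_X_succ,
    MvPolynomial.finSuccEquiv_X_zero, Polynomial.coe_mapAlgEquiv, Polynomial.map_C,
    Polynomial.map_X, RingHom.coe_coe]

lemma E_X2 : E (MvPolynomial.X 2) = C (C X) := by
  have h : (MvPolynomial.X 2 : MvPolynomial (Fin 3) ℚ) = MvPolynomial.X (Fin.succ (Fin.succ 0)) :=
    rfl
  rw [h, E]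
  simp only [AlgEquiv.trans_apply, MvPolynomial.finSuccEquiv_X_succ,
    MvPolynomial.finSuccEquiv_X_zero, Polynomial.coe_mapAlgEquiv, Polynomial.map_C,
    Polynomial.map_X, RingHom.coe_coe]

lemma E_p : E (MvPolynomial.X 0 ^ 6 - MvPolynomial.X 2 ^ 6 -
    MvPolynomial.X 1 ^ 2 * MvPolynomial.X 2 ^ 4) = X ^ 6 - C aA := by
  rw [map_sub, map_sub, map_pow, map_pow, map_mul, map_pow, map_pow, E_X0, E_X1, E_X2]
  have h : (C aA : Polynomial (Polynomial (Polynomial ℚ))) =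
      (C X) ^ 2 * (C (C X)) ^ 4 + (C (C X)) ^ 6 := by
    simp only [aA, piA, map_mul, map_add, map_pow]
    ring
  rw [h]
  ring

end Stmt7Aux

open MvPolynomial

/-- The polynomial `x⁶ − z⁶ − y²z⁴` is irreducible in `ℚ[x,y,z]`, hence
`ℚ[x,y,z]/(x⁶ − z⁶ − y²z⁴)` is an integral domain. -/
theorem stmt7 :
    Irreducible (X 0 ^ 6 - X 2 ^ 6 - X 1 ^ 2 * X 2 ^ 4 : MvPolynomial (Fin 3) ℚ) ∧
    IsDomain (MvPolynomial (Fin 3) ℚ ⧸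
      Ideal.span {(X 0 ^ 6 - X 2 ^ 6 - X 1 ^ 2 * X 2 ^ 4 : MvPolynomial (Fin 3) ℚ)}) := by
  have hirr : Irreducible (X 0 ^ 6 - X 2 ^ 6 - X 1 ^ 2 * X 2 ^ 4 : MvPolynomial (Fin 3) ℚ) := by
    have h := Stmt7Aux.irr_f
    rw [← Stmt7Aux.E_p] at h
    exact (MulEquiv.irreducible_iff Stmt7Aux.E).mp h
  refine ⟨hirr, ?_⟩
  have hp : Prime (X 0 ^ 6 - X 2 ^ 6 - X 1 ^ 2 * X 2 ^ 4 : MvPolynomial (Fin 3) ℚ) :=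
    UniqueFactorizationMonoid.irreducible_iff_prime.mp hirr
  rw [Ideal.Quotient.isDomain_iff_prime]
  exact (Ideal.span_singleton_prime hp.ne_zero).mpr hp
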